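/- arXiv:2004.07566 — 2 statements merged into one kernel-verified Lean document; each statement's English description precedes it below -/
import Mathlib

section
/- Let G = (V, E) be a graph, let S ⊆ V, and let G' be the graph on V with edge set E ∪ {uv : u, v ∈ S, u ≠ v}. Then for every partition (A, B) of V, the maximum size of an induced matching in the bipartite graph G'[A, B] is at most the maximum size of an induced matching in G[A, B] plus 1. -/
def IsMatchingSet {V : Type*} (G : SimpleGraph V) (M : Finset (Sym2 V)) : Prop :=
  (∀ e ∈ M, e ∈ G.edgeSet) ∧
    ∀ e ∈ M, ∀ f ∈ M, e ≠ f → ∀ v, v ∈ e → v ∉ f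

def IsInducedMatchingSet {V : Type*} (G : SimpleGraph V) (M : Finset (Sym2 V)) : Prop :=
  IsMatchingSet G M ∧
    ∀ e ∈ M, ∀ f ∈ M, e ≠ f → ∀ u, u ∈ e → ∀ v, v ∈ f → ¬ G.Adj u v

/-- The bipartite graph `H[A, B]`: the graph on `V` whose edges are the edges of `H`
with one endpoint in `A` and the other in `B`. -/
def cutGraph {V : Type*} (H : SimpleGraph V) (A B : Set V) : SimpleGraph V :=
  SimpleGraph.fromRel (fun u v => H.Adj u v ∧ u ∈ A ∧ v ∈ B)

lemma cutGraph_adj {V : Type*} (H : SimpleGraph V) (A B : Set V) (u v : V) :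
    (cutGraph H A B).Adj u v ↔
      u ≠ v ∧ ((H.Adj u v ∧ u ∈ A ∧ v ∈ B) ∨ (H.Adj v u ∧ v ∈ A ∧ u ∈ B)) := by
  simp [cutGraph, SimpleGraph.fromRel_adj]

lemma cutGraph_mono {V : Type*} {H H' : SimpleGraph V} (h : ∀ u v, H.Adj u v → H'.Adj u v)
    (A B : Set V) {u v : V} (hadj : (cutGraph H A B).Adj u v) :
    (cutGraph H' A B).Adj u v := by
  rw [cutGraph_adj] at hadj ⊢
  exact ⟨hadj.1, hadj.2.imp (fun ⟨a, b⟩ => ⟨h _ _ a, b⟩) (fun ⟨a, b⟩ => ⟨h _ _ a, b⟩)⟩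

/-- Completing `S` into a clique increases the maximum induced matching size across any
partition `(A, B)` by at most `1`. -/
theorem cutmim_clique_add_le {V : Type*} (G : SimpleGraph V) (S : Set V)
    (G' : SimpleGraph V)
    (hG' : ∀ u v, G'.Adj u v ↔ (G.Adj u v ∨ (u ∈ S ∧ v ∈ S ∧ u ≠ v)))
    (A B : Set V) (hUnion : A ∪ B = Set.univ) (hDisj : Disjoint A B)
    (M : Finset (Sym2 V)) (hM : IsInducedMatchingSet (cutGraph G' A B) M) :
    ∃ M' : Finset (Sym2 V),
      IsInducedMatchingSet (cutGraph G A B) M' ∧ M.card ≤ M'.card + 1 := by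
  classical
  have hmono : ∀ u v, G.Adj u v → G'.Adj u v := fun u v h => (hG' u v).mpr (Or.inl h)
  set M' := M.filter (fun e => e ∈ (cutGraph G A B).edgeSet) with hM'def
  -- every edge of M not in cutGraph G is an S-S edge across the cut
  have bad : ∀ e ∈ M, e ∉ (cutGraph G A B).edgeSet →
      ∃ a b, e = s(a, b) ∧ a ∈ A ∧ a ∈ S ∧ b ∈ B ∧ b ∈ S := by
    intro e he hne
    have heG' := hM.1.1 e he
    induction e using Sym2.ind with
    | _ u v =>
      rw [SimpleGraph.mem_edgeSet, cutGraph_adj] at heG'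
      rw [SimpleGraph.mem_edgeSet, cutGraph_adj] at hne
      obtain ⟨huv, hcase⟩ := heG'
      rcases hcase with ⟨hadj, hA, hB⟩ | ⟨hadj, hA, hB⟩
      · rcases (hG' u v).mp hadj with hG | ⟨huS, hvS, _⟩
        · exact absurd ⟨huv, Or.inl ⟨hG, hA, hB⟩⟩ hne
        · exact ⟨u, v, rfl, hA, huS, hB, hvS⟩
      · rcases (hG' v u).mp hadj with hG | ⟨hvS, huS, _⟩
        · exact absurd ⟨huv, Or.inr ⟨hG, hA, hB⟩⟩ hne
        · exact ⟨v, u, Sym2.eq_swap, hA, hvS, hB, huS⟩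
  refine ⟨M', ⟨⟨?_, ?_⟩, ?_⟩, ?_⟩
  · intro e he
    exact (Finset.mem_filter.mp he).2
  · intro e he f hf hne v hv
    exact hM.1.2 e (Finset.mem_filter.mp he).1 f (Finset.mem_filter.mp hf).1 hne v hv
  · intro e he f hf hne u hu v hv hadj
    exact hM.2 e (Finset.mem_filter.mp he).1 f (Finset.mem_filter.mp hf).1 hne u hu v hv
      (cutGraph_mono hmono A B hadj)
  · have hsplit := Finset.card_filter_add_card_filter_not
      (s := M) (p := fun e => e ∈ (cutGraph G A B).edgeSet)
    have hone : (M.filter (fun e => ¬ e ∈ (cutGraph G A B).edgeSet)).card ≤ 1 := by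
      rw [Finset.card_le_one]
      intro e he f hf
      obtain ⟨heM, heBad⟩ := Finset.mem_filter.mp he
      obtain ⟨hfM, hfBad⟩ := Finset.mem_filter.mp hf
      obtain ⟨a, b, rfl, haA, haS, hbB, hbS⟩ := bad e heM heBad
      obtain ⟨c, d, rfl, hcA, hcS, hdB, hdS⟩ := bad f hfM hfBad
      by_contra hne
      have had : a ≠ d := fun h => (hDisj.ne_of_mem haA hdB) h
      have : (cutGraph G' A B).Adj a d := by
        rw [cutGraph_adj]
        exact ⟨had, Or.inl ⟨(hG' a d).mpr (Or.inr ⟨haS, hdS, had⟩), haA, hdB⟩⟩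
      exact hM.2 _ heM _ hfM hne a (Sym2.mem_mk_left a b) d (Sym2.mem_mk_right c d) this
    simp only [hM'def]
    omega
end

section
/- Let G be a graph and let H be the graph obtained from G by subdividing a single edge e = uv three times (replacing e by a path u–x–y–z–v with three new vertices). Then the domination number satisfies γ(H) = γ(G) + 1. -/
/-- A finset `D` is a dominating set: every vertex is in `D` or has a neighbor in `D`. -/
def IsDomFinset {V : Type*} (G : SimpleGraph V) (D : Finset V) : Prop :=
  ∀ v : V, v ∈ D ∨ ∃ u ∈ D, G.Adj u v

/-- The set of sizes of dominating sets of `G`. -/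
def domSizes {V : Type*} (G : SimpleGraph V) : Set ℕ :=
  {n | ∃ D : Finset V, IsDomFinset G D ∧ D.card = n}

/-- The graph obtained from `G` by subdividing the edge `uv` three times: `uv` is
replaced by the path `u – x – y – z – v` with three new vertices. -/
def subdivThrice {V : Type*} (G : SimpleGraph V) (u v : V) : SimpleGraph (V ⊕ Fin 3) :=
  SimpleGraph.fromEdgeSet
    ((Sym2.map Sum.inl '' (G.edgeSet \ {s(u, v)})) ∪
      {s(Sum.inl u, Sum.inr 0), s(Sum.inr 0, Sum.inr 1),
        s(Sum.inr 1, Sum.inr 2), s(Sum.inr 2, Sum.inl v)})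

section Aux

variable {V : Type*} (G : SimpleGraph V) (u v : V)

lemma no_mixed (x : V) (i : Fin 3) :
    s(Sum.inl x, Sum.inr i) ∉ (Sym2.map Sum.inl '' (G.edgeSet \ {s(u, v)}) :
      Set (Sym2 (V ⊕ Fin 3))) := by
  rintro ⟨e, -, hmap⟩
  induction e with
  | h a b => simp [Sym2.eq_iff] at hmap

lemma no_rr (i j : Fin 3) :
    s(Sum.inr i, Sum.inr j) ∉ (Sym2.map Sum.inl '' (G.edgeSet \ {s(u, v)}) :
      Set (Sym2 (V ⊕ Fin 3))) := by
  rintro ⟨e, -, hmap⟩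
  induction e with
  | h a b => simp [Sym2.eq_iff] at hmap

lemma adj_ll (x y : V) : (subdivThrice G u v).Adj (Sum.inl x) (Sum.inl y) ↔
    G.Adj x y ∧ s(x, y) ≠ s(u, v) := by
  simp only [subdivThrice, SimpleGraph.fromEdgeSet_adj, Set.mem_union, Set.mem_image,
    Set.mem_diff, Set.mem_singleton_iff, Set.mem_insert_iff]
  constructor
  · rintro ⟨h | h, hne⟩
    · obtain ⟨e, ⟨he, hne'⟩, hmap⟩ := h
      induction e with
      | h a b =>
        simp [Sym2.map_pair_eq, Sym2.eq_iff] at hmap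
        rcases hmap with ⟨rfl, rfl⟩ | ⟨rfl, rfl⟩
        · exact ⟨G.mem_edgeSet.mp he, by simpa using hne'⟩
        · exact ⟨(G.mem_edgeSet.mp he).symm, by simp [Sym2.eq_swap]; simpa [Sym2.eq_iff] using hne'⟩
    · simp [Sym2.eq_iff] at h
  · rintro ⟨hadj, hne⟩
    refine ⟨Or.inl ⟨s(x,y), ⟨hadj, hne⟩, by simp⟩, by simpa using hadj.ne⟩

lemma adj_lr (x : V) (i : Fin 3) : (subdivThrice G u v).Adj (Sum.inl x) (Sum.inr i) ↔
    (x = u ∧ i = 0) ∨ (x = v ∧ i = 2) := by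
  simp only [subdivThrice, SimpleGraph.fromEdgeSet_adj, Set.mem_union, Set.mem_insert_iff,
    Set.mem_singleton_iff]
  constructor
  · rintro ⟨h | h, -⟩
    · exact absurd h (no_mixed G u v x i)
    · simp only [Sym2.eq_iff, Sum.inl.injEq, Sum.inr.injEq] at h
      simp at h ⊢
      tauto
  · rintro (⟨rfl, rfl⟩ | ⟨rfl, rfl⟩)
    · exact ⟨Or.inr (Or.inl rfl), by simp⟩
    · exact ⟨Or.inr (Or.inr (Or.inr (Or.inr (Sym2.eq_swap ▸ rfl)))), by simp⟩

lemma adj_rr (i j : Fin 3) : (subdivThrice G u v).Adj (Sum.inr i) (Sum.inr j) ↔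
    ((i = 0 ∧ j = 1) ∨ (i = 1 ∧ j = 0) ∨ (i = 1 ∧ j = 2) ∨ (i = 2 ∧ j = 1)) := by
  simp only [subdivThrice, SimpleGraph.fromEdgeSet_adj, Set.mem_union, Set.mem_insert_iff,
    Set.mem_singleton_iff]
  constructor
  · rintro ⟨h | h, hne⟩
    · exact absurd h (no_rr G u v i j)
    · simp only [Sym2.eq_iff] at h
      simp at h ⊢
      tauto
  · rintro (⟨rfl, rfl⟩ | ⟨rfl, rfl⟩ | ⟨rfl, rfl⟩ | ⟨rfl, rfl⟩) <;>
      exact ⟨by simp [Sym2.eq_iff], by simp⟩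

lemma upper_aux (huv : G.Adj u v) {D : Finset V} (hD : IsDomFinset G D) :
    ∃ D' : Finset (V ⊕ Fin 3), IsDomFinset (subdivThrice G u v) D' ∧ D'.card = D.card + 1 := by
  classical
  have hcard : ∀ j : Fin 3, ((D.image Sum.inl ∪ {Sum.inr j}) : Finset (V ⊕ Fin 3)).card
      = D.card + 1 := by
    intro j
    rw [Finset.card_union_of_disjoint (by simp),
      Finset.card_image_of_injective _ Sum.inl_injective, Finset.card_singleton]
  have memD : ∀ (j : Fin 3) (d : V), d ∈ D →
      Sum.inl d ∈ (D.image Sum.inl ∪ {Sum.inr j} : Finset (V ⊕ Fin 3)) :=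
    fun j d hd => Finset.mem_union_left _ (Finset.mem_image_of_mem _ hd)
  have memJ : ∀ j : Fin 3,
      Sum.inr j ∈ (D.image Sum.inl ∪ {Sum.inr j} : Finset (V ⊕ Fin 3)) :=
    fun j => Finset.mem_union_right _ (Finset.mem_singleton_self _)
  by_cases hu : u ∈ D
  · refine ⟨D.image Sum.inl ∪ {Sum.inr 2}, ?_, hcard 2⟩
    rintro (a | i)
    · by_cases haD : a ∈ D
      · exact Or.inl (memD 2 a haD)
      · obtain hmem | ⟨d, hd, hadj⟩ := hD a
        · exact absurd hmem haD
        by_cases he : s(d, a) = s(u, v)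
        · rw [Sym2.eq_iff] at he
          rcases he with ⟨hdu, hav⟩ | ⟨hdv, hau⟩
          · refine Or.inr ⟨Sum.inr 2, memJ 2, ?_⟩
            rw [hav]
            exact ((adj_lr G u v v 2).mpr (Or.inr ⟨rfl, rfl⟩)).symm
          · rw [hau] at haD
            exact absurd hu haD
        · exact Or.inr ⟨Sum.inl d, memD 2 d hd, (adj_ll G u v d a).mpr ⟨hadj, he⟩⟩
    · fin_cases i
      · exact Or.inr ⟨Sum.inl u, memD 2 u hu, (adj_lr G u v u 0).mpr (Or.inl ⟨rfl, rfl⟩)⟩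
      · exact Or.inr ⟨Sum.inr 2, memJ 2,
          (adj_rr G u v 2 1).mpr (Or.inr (Or.inr (Or.inr ⟨rfl, rfl⟩)))⟩
      · exact Or.inl (memJ 2)
  · by_cases hv : v ∈ D
    · refine ⟨D.image Sum.inl ∪ {Sum.inr 0}, ?_, hcard 0⟩
      rintro (a | i)
      · by_cases haD : a ∈ D
        · exact Or.inl (memD 0 a haD)
        · obtain hmem | ⟨d, hd, hadj⟩ := hD a
          · exact absurd hmem haD
          by_cases he : s(d, a) = s(u, v)
          · rw [Sym2.eq_iff] at he
            rcases he with ⟨hdu, hav⟩ | ⟨hdv, hau⟩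
            · rw [hav] at haD
              exact absurd hv haD
            · refine Or.inr ⟨Sum.inr 0, memJ 0, ?_⟩
              rw [hau]
              exact ((adj_lr G u v u 0).mpr (Or.inl ⟨rfl, rfl⟩)).symm
          · exact Or.inr ⟨Sum.inl d, memD 0 d hd, (adj_ll G u v d a).mpr ⟨hadj, he⟩⟩
      · fin_cases i
        · exact Or.inl (memJ 0)
        · exact Or.inr ⟨Sum.inr 0, memJ 0, (adj_rr G u v 0 1).mpr (Or.inl ⟨rfl, rfl⟩)⟩
        · exact Or.inr ⟨Sum.inl v, memD 0 v hv, (adj_lr G u v v 2).mpr (Or.inr ⟨rfl, rfl⟩)⟩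
    · refine ⟨D.image Sum.inl ∪ {Sum.inr 1}, ?_, hcard 1⟩
      rintro (a | i)
      · by_cases haD : a ∈ D
        · exact Or.inl (memD 1 a haD)
        · obtain hmem | ⟨d, hd, hadj⟩ := hD a
          · exact absurd hmem haD
          by_cases he : s(d, a) = s(u, v)
          · rw [Sym2.eq_iff] at he
            rcases he with ⟨hdu, hav⟩ | ⟨hdv, hau⟩
            · rw [hdu] at hd
              exact absurd hd hu
            · rw [hdv] at hd
              exact absurd hd hv
          · exact Or.inr ⟨Sum.inl d, memD 1 d hd, (adj_ll G u v d a).mpr ⟨hadj, he⟩⟩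
      · fin_cases i
        · exact Or.inr ⟨Sum.inr 1, memJ 1,
            (adj_rr G u v 1 0).mpr (Or.inr (Or.inl ⟨rfl, rfl⟩))⟩
        · exact Or.inl (memJ 1)
        · exact Or.inr ⟨Sum.inr 1, memJ 1,
            (adj_rr G u v 1 2).mpr (Or.inr (Or.inr (Or.inl ⟨rfl, rfl⟩)))⟩

lemma lower_aux (huv : G.Adj u v) {D' : Finset (V ⊕ Fin 3)}
    (hD' : IsDomFinset (subdivThrice G u v) D') :
    ∃ D : Finset V, IsDomFinset G D ∧ D.card + 1 ≤ D'.card := by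
  classical
  set D0 : Finset V := D'.preimage Sum.inl Sum.inl_injective.injOn with hD0
  have hmem : ∀ w : V, w ∈ D0 ↔ Sum.inl w ∈ D' := fun w => Finset.mem_preimage
  have key : ∀ w : V, w ∈ D0 ∨ (∃ d ∈ D0, G.Adj d w) ∨
      (w = u ∧ Sum.inr 0 ∈ D') ∨ (w = v ∧ Sum.inr 2 ∈ D') := by
    intro w
    rcases hD' (Sum.inl w) with h | ⟨d', hd', hadj⟩
    · exact Or.inl ((hmem w).mpr h)
    · match d' with
      | Sum.inl d =>
          exact Or.inr (Or.inl ⟨d, (hmem d).mpr hd', ((adj_ll G u v d w).mp hadj).1⟩)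
      | Sum.inr i =>
          rcases (adj_lr G u v w i).mp hadj.symm with ⟨rfl, rfl⟩ | ⟨rfl, rfl⟩
          · exact Or.inr (Or.inr (Or.inl ⟨rfl, hd'⟩))
          · exact Or.inr (Or.inr (Or.inr ⟨rfl, hd'⟩))
  have domG : ∀ D : Finset V, D0 ⊆ D →
      (Sum.inr 0 ∈ D' → u ∈ D ∨ ∃ d ∈ D, G.Adj d u) →
      (Sum.inr 2 ∈ D' → v ∈ D ∨ ∃ d ∈ D, G.Adj d v) →
      IsDomFinset G D := by
    intro D hsub h0 h2 w
    rcases key w with hw | ⟨d, hd, hadj⟩ | ⟨rfl, h⟩ | ⟨rfl, h⟩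
    · exact Or.inl (hsub hw)
    · exact Or.inr ⟨d, hsub hd, hadj⟩
    · exact h0 h
    · exact h2 h
  have f1 : Sum.inr 0 ∉ D' → Sum.inr 1 ∉ D' → u ∈ D0 := by
    intro h0 h1
    rcases hD' (Sum.inr 0) with h | ⟨d', hd', hadj⟩
    · exact absurd h h0
    · match d' with
      | Sum.inl d =>
          rcases (adj_lr G u v d 0).mp hadj with ⟨he, -⟩ | ⟨-, h2⟩
          · exact (hmem u).mpr (he ▸ hd')
          · exact absurd h2 (by decide)
      | Sum.inr i =>
          rcases (adj_rr G u v i 0).mp hadj with ⟨-, h⟩ | ⟨rfl, -⟩ | ⟨-, h⟩ | ⟨-, h⟩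
          · exact absurd h (by decide)
          · exact absurd hd' h1
          · exact absurd h (by decide)
          · exact absurd h (by decide)
  have f2 : Sum.inr 1 ∉ D' → Sum.inr 2 ∉ D' → v ∈ D0 := by
    intro h1 h2
    rcases hD' (Sum.inr 2) with h | ⟨d', hd', hadj⟩
    · exact absurd h h2
    · match d' with
      | Sum.inl d =>
          rcases (adj_lr G u v d 2).mp hadj with ⟨-, h⟩ | ⟨he, -⟩
          · exact absurd h (by decide)
          · exact (hmem v).mpr (he ▸ hd')
      | Sum.inr i =>
          rcases (adj_rr G u v i 2).mp hadj with ⟨-, h⟩ | ⟨-, h⟩ | ⟨rfl, -⟩ | ⟨-, h⟩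
          · exact absurd h (by decide)
          · exact absurd h (by decide)
          · exact absurd hd' h1
          · exact absurd h (by decide)
  have hpath : Sum.inr 0 ∈ D' ∨ Sum.inr 1 ∈ D' ∨ Sum.inr 2 ∈ D' := by
    rcases hD' (Sum.inr 1) with h | ⟨d', hd', hadj⟩
    · exact Or.inr (Or.inl h)
    · match d' with
      | Sum.inl d =>
          rcases (adj_lr G u v d 1).mp hadj with ⟨-, h⟩ | ⟨-, h⟩ <;> exact absurd h (by decide)
      | Sum.inr i =>
          rcases (adj_rr G u v i 1).mp hadj with ⟨rfl, -⟩ | ⟨-, h⟩ | ⟨-, h⟩ | ⟨rfl, -⟩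
          · exact Or.inl hd'
          · exact absurd h (by decide)
          · exact absurd h (by decide)
          · exact Or.inr (Or.inr hd')
  have cardS : ∀ S : Finset (V ⊕ Fin 3), S ⊆ D' → (∀ x ∈ S, ∃ i, x = Sum.inr i) →
      D0.card + S.card ≤ D'.card := by
    intro S hS hR
    have hdisj : Disjoint (D0.image Sum.inl) S := by
      rw [Finset.disjoint_left]
      rintro x hx hxS
      obtain ⟨w, -, rfl⟩ := Finset.mem_image.mp hx
      obtain ⟨i, h⟩ := hR _ hxS
      simp at h
    calc D0.card + S.card = (D0.image Sum.inl ∪ S).card := by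
          rw [Finset.card_union_of_disjoint hdisj,
            Finset.card_image_of_injective _ Sum.inl_injective]
      _ ≤ D'.card := Finset.card_le_card (Finset.union_subset
          (fun x hx => by
            obtain ⟨w, hw, rfl⟩ := Finset.mem_image.mp hx
            exact (hmem w).mp hw) hS)
  have step1 : ∀ (x : V ⊕ Fin 3), x ∈ D' → (∃ i, x = Sum.inr i) →
      D0.card + 1 ≤ D'.card := by
    intro x hx hix
    have := cardS {x} (by simpa) (by simpa)
    simpa using this
  have step2 : ∀ (x y : V ⊕ Fin 3), x ∈ D' → y ∈ D' → x ≠ y →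
      (∃ i, x = Sum.inr i) → (∃ i, y = Sum.inr i) → D0.card + 2 ≤ D'.card := by
    intro x y hx hy hxy hix hiy
    have hsub : ({x, y} : Finset (V ⊕ Fin 3)) ⊆ D' := by
      intro z hz; simp at hz; rcases hz with rfl | rfl <;> assumption
    have hR : ∀ z ∈ ({x, y} : Finset (V ⊕ Fin 3)), ∃ i, z = Sum.inr i := by
      intro z hz; simp at hz; rcases hz with rfl | rfl <;> assumption
    have h2 : ({x, y} : Finset (V ⊕ Fin 3)).card = 2 := by
      rw [Finset.card_insert_of_notMem (by simpa), Finset.card_singleton]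
    have := cardS {x, y} hsub hR
    omega
  have cardU : ∀ t : V, (D0 ∪ {t}).card ≤ D0.card + 1 :=
    fun t => le_trans (Finset.card_union_le _ _) (by simp)
  by_cases c0 : Sum.inr 0 ∈ D' <;> by_cases c1 : Sum.inr 1 ∈ D' <;>
    by_cases c2 : Sum.inr 2 ∈ D'
  · refine ⟨D0 ∪ {u}, domG _ Finset.subset_union_left
      (fun _ => Or.inl (by simp)) (fun _ => Or.inr ⟨u, by simp, huv⟩), ?_⟩
    have := step2 _ _ c0 c1 (by simp) ⟨0, rfl⟩ ⟨1, rfl⟩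
    have := cardU u
    omega
  · refine ⟨D0 ∪ {u}, domG _ Finset.subset_union_left
      (fun _ => Or.inl (by simp)) (fun _ => Or.inr ⟨u, by simp, huv⟩), ?_⟩
    have := step2 _ _ c0 c1 (by simp) ⟨0, rfl⟩ ⟨1, rfl⟩
    have := cardU u
    omega
  · refine ⟨D0 ∪ {u}, domG _ Finset.subset_union_left
      (fun _ => Or.inl (by simp)) (fun _ => Or.inr ⟨u, by simp, huv⟩), ?_⟩
    have := step2 _ _ c0 c2 (by simp) ⟨0, rfl⟩ ⟨2, rfl⟩
    have := cardU u
    omega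
  · have hv : v ∈ D0 := f2 c1 c2
    refine ⟨D0, domG _ subset_rfl
      (fun _ => Or.inr ⟨v, hv, huv.symm⟩) (fun h => absurd h c2), ?_⟩
    exact step1 _ c0 ⟨0, rfl⟩
  · refine ⟨D0 ∪ {v}, domG _ Finset.subset_union_left
      (fun h => absurd h c0) (fun _ => Or.inl (by simp)), ?_⟩
    have := step2 _ _ c1 c2 (by simp) ⟨1, rfl⟩ ⟨2, rfl⟩
    have := cardU v
    omega
  · refine ⟨D0, domG _ subset_rfl
      (fun h => absurd h c0) (fun h => absurd h c2), ?_⟩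
    exact step1 _ c1 ⟨1, rfl⟩
  · have hu : u ∈ D0 := f1 c0 c1
    refine ⟨D0, domG _ subset_rfl
      (fun h => absurd h c0) (fun _ => Or.inr ⟨u, hu, huv⟩), ?_⟩
    exact step1 _ c2 ⟨2, rfl⟩
  · rcases hpath with h | h | h
    · exact absurd h c0
    · exact absurd h c1
    · exact absurd h c2

end Aux

/-- Subdividing an edge three times increases the domination number by exactly one. -/
theorem gamma_subdivThrice {V : Type*} (G : SimpleGraph V) (u v : V) (huv : G.Adj u v)
    (a b : ℕ) (ha : IsLeast (domSizes G) a)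
    (hb : IsLeast (domSizes (subdivThrice G u v)) b) :
    b = a + 1 := by
  obtain ⟨DG, hdom, hcard⟩ := ha.1
  obtain ⟨D', hdom', hcard'⟩ := upper_aux G u v huv hdom
  have hb1 : b ≤ a + 1 := hb.2 ⟨D', hdom', by rw [hcard', hcard]⟩
  obtain ⟨DH, hdomH, hcardH⟩ := hb.1
  obtain ⟨D, hdomG, hle⟩ := lower_aux G u v huv hdomH
  have ha1 : a ≤ D.card := ha.2 ⟨D, hdomG, rfl⟩
  omega
end
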